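/- arXiv:1210.7885 — 2 statements merged into one kernel-verified Lean document; each statement's English description precedes it below -/
import Mathlib

section
/- There exists a real number ε > 0 such that the set of totally real algebraic numbers α (i.e., algebraic numbers whose minimal polynomial over ℚ splits over ℝ) with h(α) < ε is finite. In particular, every totally real algebraic number other than 0, 1, −1, with at most finitely many exceptions of height at least some fixed positive bound, has Weil height bounded below by a positive absolute constant. -/
/-!
Let `α ≠ 0, ±1` have minimal polynomial `p` over `ℚ`, of degree `d`, and let `a` be the leading
coefficient of its primitive integer multiple. Then `a * p(j)` is a nonzero integer for
`j = 0, 1, -1`, so `|a³ p(0) p(1) p(-1)| ≥ 1`. If `α` is totally real, this product is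
`± a³ ∏ βᵢ (βᵢ² - 1)` over its real conjugates `βᵢ`, and the elementary bound
`27 β² (β² - 1)² ≤ 4 max(1, |β|)⁸` gives `(27/4)^d ≤ (a ∏ max(1, |βᵢ|))⁸`,
that is `h(α) ≥ log(27/4) / 8`.
-/

open Polynomial

/-- The positive leading coefficient `a` of the integer minimal polynomial of an algebraic
number: the least positive integer `n` such that `n * minpoly ℚ α` has integer
coefficients. -/
noncomputable def intLeadCoeff (α : ℂ) : ℕ :=
  sInf {n : ℕ | 0 < n ∧ ∀ k, ((n : ℚ) * (minpoly ℚ α).coeff k).den = 1}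

/-- The absolute logarithmic Weil height of an algebraic number `α ∈ ℂ` of degree `d`, whose
minimal polynomial over `ℤ` is `a • ∏ (X - αᵢ)`:
`h(α) = (1/d) * (log a + ∑ᵢ log max (1, |αᵢ|))`. -/
noncomputable def weilHeight (α : ℂ) : ℝ :=
  (1 / (minpoly ℚ α).natDegree) *
    (Real.log (intLeadCoeff α) +
      (((minpoly ℚ α).map (algebraMap ℚ ℂ)).roots.map
        fun z => Real.log (max 1 ‖z‖)).sum)

/-- Equality holds at `b ^ 2 = 1 / 3` and at `b ^ 2 = 3`; this is where `27 / 4` comes from. -/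
lemma mul_sq_sub_one_sq_le (b : ℝ) : 27 * (b * (b ^ 2 - 1)) ^ 2 ≤ 4 * max 1 |b| ^ 8 := by
  rcases le_total |b| 1 with h | h
  · rw [max_eq_left h]
    have hb2 : b ^ 2 ≤ 1 := by nlinarith [sq_abs b, abs_nonneg b]
    nlinarith [mul_nonneg (sq_nonneg (3 * b ^ 2 - 1)) (by nlinarith : (0:ℝ) ≤ 4 - 3 * b ^ 2)]
  · rw [max_eq_right h, ← abs_pow, abs_of_nonneg (by positivity)]
    have hb2 : 1 ≤ b ^ 2 := by nlinarith [sq_abs b]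
    nlinarith [mul_nonneg (mul_nonneg (sq_nonneg b) (sq_nonneg (b ^ 2 - 3)))
      (by nlinarith : (0:ℝ) ≤ 4 * b ^ 2 - 3)]

lemma Polynomial.Splits.pow_natDegree_le_of_one_le_abs_eval {q : ℝ[X]} (hs : q.Splits)
    (hm : q.Monic) {a : ℝ} (ha : 1 ≤ a) (hq : 1 ≤ |a ^ 3 * (q.eval 0 * q.eval 1 * q.eval (-1))|) :
    (27 / 4 : ℝ) ^ q.natDegree ≤ (a * (q.roots.map fun b => max 1 |b|).prod) ^ 8 := by
  have hsq : (q.eval 0 * q.eval 1 * q.eval (-1)) ^ 2 =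
      (q.roots.map fun b => (b * (b ^ 2 - 1)) ^ 2).prod := by
    simp only [hs.eval_eq_prod_roots_of_monic hm, ← Multiset.prod_map_mul, ← Multiset.prod_map_pow]
    exact congrArg _ (Multiset.map_congr rfl fun b _ => by ring)
  have hone : 1 ≤ a ^ 2 * (a ^ 3 * (q.eval 0 * q.eval 1 * q.eval (-1))) ^ 2 :=
    one_le_mul_of_one_le_of_one_le (one_le_pow₀ ha) (one_le_sq_iff_one_le_abs _ |>.mpr hq)
  rw [hs.natDegree_eq_card_roots, div_pow, div_le_iff₀ (by positivity)]
  calc (27 : ℝ) ^ q.roots.card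
      ≤ 27 ^ q.roots.card * (a ^ 2 * (a ^ 3 * (q.eval 0 * q.eval 1 * q.eval (-1))) ^ 2) :=
        le_mul_of_one_le_right (by positivity) hone
    _ = a ^ 8 * (q.roots.map fun b => 27 * (b * (b ^ 2 - 1)) ^ 2).prod := by
        rw [Multiset.prod_map_mul, Multiset.map_const', Multiset.prod_replicate, ← hsq]; ring
    _ ≤ a ^ 8 * (q.roots.map fun b => 4 * max 1 |b| ^ 8).prod := by
        gcongr
        exact Multiset.prod_map_le_prod_map₀ _ _ (fun b _ => by positivity)
          (fun b _ => mul_sq_sub_one_sq_le b)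
    _ = (a * (q.roots.map fun b => max 1 |b|).prod) ^ 8 * 4 ^ q.roots.card := by
        rw [Multiset.prod_map_mul, Multiset.map_const', Multiset.prod_replicate,
          Multiset.prod_map_pow]; ring

lemma intLeadCoeff_spec (α : ℂ) :
    0 < intLeadCoeff α ∧ ∀ k, ((intLeadCoeff α : ℚ) * (minpoly ℚ α).coeff k).den = 1 := by
  refine Nat.sInf_mem (s := {n : ℕ | 0 < n ∧ ∀ k, ((n : ℚ) * (minpoly ℚ α).coeff k).den = 1})
    ⟨∏ k ∈ (minpoly ℚ α).support, ((minpoly ℚ α).coeff k).den,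
      Finset.prod_pos fun k _ => Rat.den_pos _, fun k => ?_⟩
  by_cases hk : k ∈ (minpoly ℚ α).support
  · obtain ⟨c, hc⟩ := Finset.dvd_prod_of_mem (fun k => ((minpoly ℚ α).coeff k).den) hk
    rw [hc, Nat.cast_mul, mul_comm, ← mul_assoc, Rat.mul_den_eq_num]
    exact_mod_cast Rat.den_intCast (((minpoly ℚ α).coeff k).num * c)
  · simp [notMem_support_iff.mp hk]

lemma Polynomial.exists_intCast_eq_eval_intCast {f : ℚ[X]} (hf : ∀ k, (f.coeff k).den = 1)
    (j : ℤ) : ∃ m : ℤ, (m : ℚ) = f.eval (j : ℚ) := by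
  obtain ⟨g, hg⟩ : f ∈ lifts (Int.castRingHom ℚ) :=
    (lifts_iff_coeff_lifts f).mpr fun k =>
      ⟨(f.coeff k).num, by simpa using (Rat.den_eq_one_iff _).mp (hf k)⟩
  exact ⟨g.eval j, by rw [← hg, coe_mapRingHom, eval_intCast_map, eq_intCast, Int.cast_id]⟩

lemma one_le_abs_intLeadCoeff_mul_eval {α : ℂ} (hα : IsIntegral ℚ α) {j : ℤ} (hj : α ≠ j) :
    1 ≤ |(intLeadCoeff α : ℚ) * (minpoly ℚ α).eval (j : ℚ)| := by
  obtain ⟨ha, hden⟩ := intLeadCoeff_spec α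
  obtain ⟨m, hm⟩ := exists_intCast_eq_eval_intCast (f := C (intLeadCoeff α : ℚ) * minpoly ℚ α)
    (by simpa only [coeff_C_mul] using hden) j
  rw [eval_C_mul] at hm
  have hroot : (minpoly ℚ α).eval (j : ℚ) ≠ 0 := fun h =>
    hj (by simpa using (minpoly.root hα h).symm)
  rw [← hm]
  exact_mod_cast Int.one_le_abs fun hm0 =>
    mul_ne_zero (Nat.cast_ne_zero.mpr ha.ne') hroot (by rw [← hm, hm0, Int.cast_zero])

lemma weilHeight_eq_log_div_of_splits {α : ℂ}
    (hsp : ((minpoly ℚ α).map (algebraMap ℚ ℝ)).Splits) :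
    weilHeight α = Real.log (intLeadCoeff α *
        (((minpoly ℚ α).map (algebraMap ℚ ℝ)).roots.map fun b => max 1 |b|).prod) /
      (minpoly ℚ α).natDegree := by
  have hroots : ((minpoly ℚ α).map (algebraMap ℚ ℂ)).roots =
      ((minpoly ℚ α).map (algebraMap ℚ ℝ)).roots.map (algebraMap ℝ ℂ) := by
    rw [← hsp.roots_map_of_injective (algebraMap ℝ ℂ).injective, map_map,
      ← IsScalarTower.algebraMap_eq]
  have hpos : ∀ x ∈ ((minpoly ℚ α).map (algebraMap ℚ ℝ)).roots.map fun b => max 1 |b|, 0 < x := by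
    intro x hx
    obtain ⟨b, -, rfl⟩ := Multiset.mem_map.mp hx
    positivity
  rw [weilHeight, hroots, Multiset.map_map, Real.log_mul (by simp [(intLeadCoeff_spec α).1.ne'])
    (Multiset.prod_pos hpos).ne', Real.log_multiset_prod fun x hx => (hpos x hx).ne',
    Multiset.map_map]
  simp [div_eq_inv_mul, Complex.norm_real]

theorem log_27_div_4_div_8_le_weilHeight {α : ℂ} (hα : IsIntegral ℚ α)
    (hsp : ((minpoly ℚ α).map (algebraMap ℚ ℝ)).Splits) (h0 : α ≠ 0) (h1 : α ≠ 1)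
    (hm1 : α ≠ -1) : Real.log (27 / 4) / 8 ≤ weilHeight α := by
  set q := (minpoly ℚ α).map (algebraMap ℚ ℝ)
  have hj (j : ℤ) (hαj : α ≠ j) : 1 ≤ |(intLeadCoeff α : ℝ) * q.eval (j : ℝ)| := by
    rw [eval_intCast_map, eq_ratCast]
    exact_mod_cast one_le_abs_intLeadCoeff_mul_eval hα hαj
  have hq : 1 ≤ |(intLeadCoeff α : ℝ) ^ 3 * (q.eval 0 * q.eval 1 * q.eval (-1))| := by
    have h := one_le_mul_of_one_le_of_one_le (one_le_mul_of_one_le_of_one_le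
      (hj 0 (by simpa using h0)) (hj 1 (by simpa using h1))) (hj (-1) (by simpa using hm1))
    rw [← abs_mul, ← abs_mul] at h
    refine h.trans_eq (congrArg abs ?_)
    push_cast
    ring
  have hbound := hsp.pow_natDegree_le_of_one_le_abs_eval ((minpoly.monic hα).map _)
    (Nat.one_le_cast.mpr (intLeadCoeff_spec α).1) hq
  rw [natDegree_map] at hbound
  have hlog := Real.log_le_log (by positivity) hbound
  rw [Real.log_pow, Real.log_pow] at hlog
  rw [weilHeight_eq_log_div_of_splits hsp,
    le_div_iff₀ (by exact_mod_cast minpoly.natDegree_pos hα)]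
  linarith

/-- There is an `ε > 0` such that only finitely many totally real algebraic numbers have
Weil height less than `ε`. -/
theorem totally_real_strong_bogomolov :
    ∃ ε : ℝ, 0 < ε ∧
      {α : ℂ | IsAlgebraic ℚ α ∧ ((minpoly ℚ α).map (algebraMap ℚ ℝ)).Splits ∧
        weilHeight α < ε}.Finite := by
  refine ⟨Real.log (27 / 4) / 8, by positivity, (Set.toFinite {0, 1, -1}).subset ?_⟩
  rintro α ⟨hα, hsp, hlt⟩
  by_contra hmem
  simp only [Set.mem_insert_iff, Set.mem_singleton_iff, not_or] at hmem
  exact hlt.not_ge (log_27_div_4_div_8_le_weilHeight hα.isIntegral hsp hmem.1 hmem.2.1 hmem.2.2)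
end

section
/- Let K be a field with algebraic closure Ω, let I be an index set, and for each i ∈ I let M_i be a field extension of K. Then the set L = {α ∈ Ω : for every i ∈ I, the minimal polynomial of α over K splits over M_i} is an intermediate field of the extension Ω/K, and L is a normal extension of K. -/
/-!
Embed the relative algebraic closure of `K` in `M i` into `Ω` with image `E i`; since the roots
of a minimal polynomial are algebraic, `minpoly K α` splits over `M i` exactly when it splits
over `E i`, i.e. when every `K`-conjugate `σ α` lies in `E i`. So `L` is the set of `α` all of
whose conjugates lie in `⨅ i, E i`, and a set closed under `Gal(Ω/K)` is normal over `K`.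
-/

open Polynomial

namespace IntermediateField

variable {K Ω : Type*} [Field K] [Field Ω] [Algebra K Ω]

theorem mem_iInf {ι : Sort*} {S : ι → IntermediateField K Ω} {x : Ω} :
    x ∈ ⨅ i, S i ↔ ∀ i, x ∈ S i := by
  rw [← SetLike.mem_coe, coe_iInf, Set.mem_iInter]
  rfl

/-- As with `Subgroup.normalCore`: the largest subfield of `F` stable under `Gal(Ω/K)`. -/
def normalCore (F : IntermediateField K Ω) : IntermediateField K Ω :=
  ⨅ σ : Ω ≃ₐ[K] Ω, F.comap (σ : Ω →ₐ[K] Ω)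

theorem mem_normalCore {F : IntermediateField K Ω} {x : Ω} :
    x ∈ F.normalCore ↔ ∀ σ : Ω ≃ₐ[K] Ω, σ x ∈ F :=
  mem_iInf

theorem normal_normalCore [Normal K Ω] (F : IntermediateField K Ω) : Normal K F.normalCore := by
  refine normal_iff_forall_map_le'.2 fun σ x hx ↦ ?_
  obtain ⟨y, hy, rfl⟩ := (mem_map _).1 hx
  exact mem_normalCore.2 fun τ ↦ mem_normalCore.1 hy (σ.trans τ)

theorem splits_minpoly_iff_mem_normalCore [Normal K Ω] (F : IntermediateField K Ω) (x : Ω) :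
    ((minpoly K x).map (algebraMap K F)).Splits ↔ x ∈ F.normalCore := by
  have hx : IsIntegral K x := Algebra.IsIntegral.isIntegral x
  rw [splits_iff_mem (Normal.splits' x), mem_normalCore]
  refine ⟨fun h σ ↦ h _ ?_, fun h y hy ↦ ?_⟩
  · rw [mem_rootSet, aeval_algEquiv, AlgHom.comp_apply, minpoly.aeval, map_zero]
    exact ⟨minpoly.ne_zero hx, rfl⟩
  · obtain ⟨σ, rfl⟩ := minpoly.exists_algEquiv_of_root' hx.isAlgebraic ((mem_rootSet.1 hy).2)
    exact h σ

end IntermediateField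

theorem splits_map_iff_splits_map_fieldRange {K M Ω : Type*} [Field K] [Field M] [Field Ω]
    [Algebra K M] [Algebra K Ω] (φ : algebraicClosure K M →ₐ[K] Ω) (p : K[X]) :
    (p.map (algebraMap K M)).Splits ↔ (p.map (algebraMap K φ.fieldRange)).Splits :=
  ⟨fun h ↦ (Splits.algebraicClosure M h).of_algHom φ.equivFieldRange.toAlgHom,
    fun h ↦ h.of_algHom ((algebraicClosure K M).val.comp φ.equivFieldRange.symm.toAlgHom)⟩

/-- Let `K` be a field with algebraic closure `Ω`, and for each `i` in an index set `I` let
`M i` be a field extension of `K`.  Then the set of `α ∈ Ω` whose minimal polynomial over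
`K` splits over `M i` for every `i` is an intermediate field of `Ω/K`, and it is a normal
extension of `K`. -/
theorem totally_split_set_is_normal_intermediate_field
    (K Ω : Type*) [Field K] [Field Ω] [Algebra K Ω] [IsAlgClosure K Ω]
    (I : Type*) (M : I → Type*) [∀ i, Field (M i)] [∀ i, Algebra K (M i)] :
    ∃ L : IntermediateField K Ω,
      (L : Set Ω) = {α : Ω | ∀ i, ((minpoly K α).map (algebraMap K (M i))).Splits} ∧
      Normal K L := by
  have : IsAlgClosed Ω := IsAlgClosure.isAlgClosed K
  let φ (i : I) : algebraicClosure K (M i) →ₐ[K] Ω := IsAlgClosed.lift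
  refine ⟨IntermediateField.normalCore (⨅ i, (φ i).fieldRange), ?_,
    IntermediateField.normal_normalCore _⟩
  ext α
  simp only [SetLike.mem_coe, Set.mem_ofPred_eq, splits_map_iff_splits_map_fieldRange (φ _),
    IntermediateField.splits_minpoly_iff_mem_normalCore, IntermediateField.mem_normalCore,
    IntermediateField.mem_iInf]
  exact forall_comm
end
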